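/- The odd *-Pell polynomials satisfy, for n ≥ 0, with h₀ = s₁² - s₂ and h₁ = s₂² - s₁s₃: P_{4n+1} = s₂·Σ_{i=0}^{n}(-1)^i·C(2n-i,i)·(h₀h₁)^{n-i}·s₃^{2i} - s₁·Σ_{i=0}^{n-1}(-1)^i·C(2n-1-i,i)·h₁·(h₀h₁)^{n-i-1}·s₃^{2i+1}. -/
import Mathlib


open MvPolynomial

noncomputable section

/-- The polynomial ring `ℤ[s₁,s₂,s₃]`. -/
abbrev A3 := MvPolynomial (Fin 3) ℤ

def S1 : A3 := X 0
def S2 : A3 := X 1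
def S3 : A3 := X 2

/-- `h n = s₂² - s₁ s₃` if `n` is odd, `s₁² - s₂` if `n` is even. -/
def h (n : ℕ) : A3 := if n % 2 = 1 then S2 ^ 2 - S1 * S3 else S1 ^ 2 - S2

/-- The odd `*`-Pell polynomials: `starPell n = P_{2n+1}`, with `P₁ = s₂`,
`P₃ = s₁² s₂ - s₁ s₃ - s₂²`, `P_{4n+3} = (s₁² - s₂) P_{4n+1} - s₃² P_{4n-1}`,
`P_{4n+5} = (s₂² - s₁ s₃) P_{4n+3} - s₃² P_{4n+1}`
(i.e. `P_{2n+3} = h_n P_{2n+1} - s₃² P_{2n-1}`). -/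
def starPell : ℕ → A3
  | 0 => S2
  | 1 => S1 ^ 2 * S2 - S1 * S3 - S2 ^ 2
  | (n + 2) => h (n + 1) * starPell (n + 1) - S3 ^ 2 * starPell n



def T (x y : A3) (m k : ℕ) : A3 :=
  ∑ i ∈ Finset.range k, (-1 : A3) ^ i * ((m - i).choose i : A3) * x ^ (k - 1 - i) * y ^ i

def dcoef (m : ℕ) : ℕ → ℕ
  | 0 => 0
  | (j + 1) => (m + 2 - j).choose j

def ecoef (m : ℕ) : ℕ → ℕ
  | 0 => 0
  | 1 => 0
  | (j + 2) => (m - j).choose j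

lemma coeff_id (m : ℕ) : ∀ j, j ≤ m + 2 →
    (m + 4 - j).choose j + ecoef m j = (m + 2 - j).choose j + 2 * dcoef m j
  | 0, _ => by simp [dcoef, ecoef]
  | 1, _ => by simp [dcoef, ecoef]
  | (j + 2), hj => by
    have h1 : m + 4 - (j + 2) = (m - j) + 2 := by omega
    have h2 : m + 2 - (j + 2) = m - j := by omega
    have h3 : m + 2 - (j + 1) = (m - j) + 1 := by omega
    rw [h1, h2, show dcoef m (j+2) = (m + 2 - (j+1)).choose (j+1) from rfl, h3,
      show ecoef m (j+2) = (m - j).choose j from rfl]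
    simp [Nat.choose_succ_succ]
    ring

lemma key (x y : A3) (m k : ℕ) (hk : k ≤ m + 1) (hm : m < 2 * k) :
    T x y (m + 4) (k + 2) = (x - 2 * y) * T x y (m + 2) (k + 1) - y ^ 2 * T x y m k := by
  have Hx : (∑ j ∈ Finset.range (k + 2),
      (-1 : A3) ^ j * ((m + 2 - j).choose j : A3) * x ^ (k + 1 - j) * y ^ j)
      = x * T x y (m + 2) (k + 1) := by
    have hlt : m + 2 - (k + 1) < k + 1 := by omega
    rw [Finset.sum_range_succ, Nat.choose_eq_zero_of_lt hlt]
    rw [T, Finset.mul_sum]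
    simp only [Nat.cast_zero, mul_zero, zero_mul, add_zero]
    refine Finset.sum_congr rfl fun i hi => ?_
    have hik : i ≤ k := by simpa using Nat.lt_succ_iff.mp (Finset.mem_range.mp hi)
    have : k + 1 - i = (k + 1 - 1 - i) + 1 := by omega
    rw [this, pow_succ]
    ring
  have Hd : (∑ j ∈ Finset.range (k + 2),
      (-1 : A3) ^ j * (dcoef m j : A3) * x ^ (k + 1 - j) * y ^ j)
      = -(y * T x y (m + 2) (k + 1)) := by
    rw [Finset.sum_range_succ']
    rw [T, Finset.mul_sum, ← Finset.sum_neg_distrib]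
    simp only [dcoef, Nat.cast_zero, mul_zero, zero_mul, pow_zero, mul_one, add_zero]
    refine Finset.sum_congr rfl fun i hi => ?_
    have : k + 1 - (i + 1) = k + 1 - 1 - i := by omega
    rw [this, pow_succ (-1 : A3), pow_succ y]
    ring
  have He : (∑ j ∈ Finset.range (k + 2),
      (-1 : A3) ^ j * (ecoef m j : A3) * x ^ (k + 1 - j) * y ^ j)
      = y ^ 2 * T x y m k := by
    rw [Finset.sum_range_succ', Finset.sum_range_succ']
    rw [T, Finset.mul_sum]
    simp only [ecoef, Nat.cast_zero, mul_zero, zero_mul, pow_zero, mul_one, add_zero]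
    refine Finset.sum_congr rfl fun i hi => ?_
    have hik : i < k := Finset.mem_range.mp hi
    have : k + 1 - (i + 1 + 1) = k - 1 - i := by omega
    rw [this]
    ring
  have main : T x y (m + 4) (k + 2) = (∑ j ∈ Finset.range (k + 2),
      (-1 : A3) ^ j * ((m + 2 - j).choose j : A3) * x ^ (k + 1 - j) * y ^ j)
      + 2 * (∑ j ∈ Finset.range (k + 2),
      (-1 : A3) ^ j * (dcoef m j : A3) * x ^ (k + 1 - j) * y ^ j)
      - (∑ j ∈ Finset.range (k + 2),
      (-1 : A3) ^ j * (ecoef m j : A3) * x ^ (k + 1 - j) * y ^ j) := by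
    rw [Finset.mul_sum, ← Finset.sum_add_distrib, ← Finset.sum_sub_distrib, T]
    refine Finset.sum_congr rfl fun j hj => ?_
    have hjk : j ≤ m + 2 := by
      have := Finset.mem_range.mp hj; omega
    have hc := coeff_id m j hjk
    have hc' : ((m + 4 - j).choose j : A3)
        = ((m + 2 - j).choose j : A3) + 2 * (dcoef m j : A3) - (ecoef m j : A3) := by
      have := congrArg (fun t : ℕ => (t : A3)) hc
      push_cast at this
      linear_combination this
    rw [show k + 2 - 1 - j = k + 1 - j from rfl, hc']
    ring
  rw [main, Hx, Hd, He]
  ring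

lemma starPell_add_two (n : ℕ) :
    starPell (n + 2) = h (n + 1) * starPell (n + 1) - S3 ^ 2 * starPell n := rfl

lemma h_even (n : ℕ) : h (2 * n) = S1 ^ 2 - S2 := by
  have : 2 * n % 2 = 0 := by omega
  simp [h, this]

lemma h_odd (n : ℕ) : h (2 * n + 1) = S2 ^ 2 - S1 * S3 := by
  have : (2 * n + 1) % 2 = 1 := by omega
  simp [h, this]

lemma h0_eq : h 0 = S1 ^ 2 - S2 := by simp [h]
lemma h1_eq : h 1 = S2 ^ 2 - S1 * S3 := by simp [h]

lemma even_rec (n : ℕ) :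
    starPell (2 * n + 4) = (h 0 * h 1 - 2 * S3 ^ 2) * starPell (2 * n + 2)
      - S3 ^ 2 * S3 ^ 2 * starPell (2 * n) := by
  have e4 := starPell_add_two (2 * n + 2)
  have e3 := starPell_add_two (2 * n + 1)
  have e2 := starPell_add_two (2 * n)
  have h3 : h (2 * n + 2 + 1) = h 1 := by rw [show 2*n+2+1 = 2*(n+1)+1 from by ring, h_odd, h1_eq]
  have h2 : h (2 * n + 1 + 1) = h 0 := by rw [show 2*n+1+1 = 2*(n+1) from by ring, h_even, h0_eq]
  have h1' : h (2 * n + 1) = h 1 := by rw [h_odd, h1_eq]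
  rw [show 2*n+4 = 2*n+2+2 from by ring, e4, h3,
      show 2*n+2+1 = 2*n+1+2 from by ring, e3, h2,
      show 2*n+1+1 = 2*n+2 from by ring, e2, h1']
  ring

lemma T_odd_rec (x y : A3) (n : ℕ) :
    T x y (2 * n + 3) (n + 2)
      = (x - 2 * y) * T x y (2 * n + 1) (n + 1) - y ^ 2 * T x y (2 * n - 1) n := by
  match n with
  | 0 =>
    simp [T, Finset.sum_range_succ]
    ring
  | (p + 1) =>
    have := key x y (2 * p + 1) (p + 1) (by omega) (by omega)
    rw [show 2*(p+1)+3 = (2*p+1)+4 from by ring, show (p+1)+2 = (p+1)+2 from rfl]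
    rw [show 2*(p+1)+1 = (2*p+1)+2 from by ring, show 2*(p+1)-1 = 2*p+1 from by omega]
    exact this

lemma T_even_rec (x y : A3) (n : ℕ) :
    T x y (2 * n + 4) (n + 3)
      = (x - 2 * y) * T x y (2 * n + 2) (n + 2) - y ^ 2 * T x y (2 * n) (n + 1) := by
  have := key x y (2 * n) (n + 1) (by omega) (by omega)
  rw [show n + 3 = (n+1)+2 from rfl] at this ⊢
  exact this

lemma aux (n : ℕ) :
    starPell (2 * n) = S2 * T (h 0 * h 1) (S3 ^ 2) (2 * n) (n + 1)
      - S1 * (h 1 * S3 * T (h 0 * h 1) (S3 ^ 2) (2 * n - 1) n) := by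
  induction n using Nat.twoStepInduction with
  | zero => simp [T, starPell]
  | one =>
    rw [show 2 * 1 = 0 + 2 from rfl, starPell_add_two]
    simp [T, starPell, Finset.sum_range_succ, h]
    ring
  | more p ih1 ih2 =>
    have hA := T_even_rec (h 0 * h 1) (S3 ^ 2) p
    have hB := T_odd_rec (h 0 * h 1) (S3 ^ 2) p
    rw [show 2 * (p + 1) = 2 * p + 2 from by ring,
        show (2 * p + 2 : ℕ) - 1 = 2 * p + 1 from by omega,
        show (p + 1 + 1 : ℕ) = p + 2 from by omega] at ih2
    rw [show 2 * (p + 2) = 2 * p + 4 from by ring, even_rec, ih2, ih1,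
        show (2 * p + 4 : ℕ) - 1 = 2 * p + 3 from by omega,
        show (p + 2 + 1 : ℕ) = p + 3 from by omega, hA, hB]
    ring

/-- Explicit formula for `P_{4n+1}`, with `h₀ = s₁² - s₂` and `h₁ = s₂² - s₁ s₃`. -/
theorem starPell_formula_4n1 (n : ℕ) :
    starPell (2 * n) =
      S2 * ∑ i ∈ Finset.range (n + 1),
          (-1 : A3) ^ i * (Nat.choose (2 * n - i) i : A3) * (h 0 * h 1) ^ (n - i) * S3 ^ (2 * i)
      - S1 * ∑ i ∈ Finset.range n,
          (-1 : A3) ^ i * (Nat.choose (2 * n - 1 - i) i : A3) * h 1 * (h 0 * h 1) ^ (n - i - 1)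
            * S3 ^ (2 * i + 1) := by
  have e1 : T (h 0 * h 1) (S3 ^ 2) (2 * n) (n + 1)
      = ∑ i ∈ Finset.range (n + 1),
          (-1 : A3) ^ i * (Nat.choose (2 * n - i) i : A3) * (h 0 * h 1) ^ (n - i) * S3 ^ (2 * i) := by
    rw [T]
    refine Finset.sum_congr rfl fun i hi => ?_
    rw [pow_mul, show n + 1 - 1 - i = n - i from by omega]
  have e2 : h 1 * S3 * T (h 0 * h 1) (S3 ^ 2) (2 * n - 1) n
      = ∑ i ∈ Finset.range n,
          (-1 : A3) ^ i * (Nat.choose (2 * n - 1 - i) i : A3) * h 1 * (h 0 * h 1) ^ (n - i - 1)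
            * S3 ^ (2 * i + 1) := by
    rw [T, Finset.mul_sum]
    refine Finset.sum_congr rfl fun i hi => ?_
    rw [← pow_mul, pow_succ, show n - 1 - i = n - i - 1 from by omega]
    ring
  rw [aux n, e1, e2]
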